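/- arXiv:2204.05277 — 3 statements merged into one kernel-verified Lean document; each statement's English description precedes it below -/
import Mathlib

section
/- There exists a continuous map f : ℕ^ℕ → {0,1}^ℕ such that for every a ∈ ℕ^ℕ, the image f(a) is typical if and only if a_n → ∞ as n → ∞ (i.e. liminf_{n→∞} a_n = ∞). Consequently f⁻¹(TpcN) = P₃, where P₃ = {a ∈ ℕ^ℕ : a_n → ∞}. -/
open Filter

open Classical in
/-- `L_n(x)`: the maximal length of a run of consecutive ones among the first `n`
digits (positions `1,…,n`) of the binary sequence `x`. -/
noncomputable def runL (x : ℕ → Bool) (n : ℕ) : ℕ :=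
  Nat.findGreatest
    (fun j => ∃ i, i + j ≤ n ∧ ∀ k, 1 ≤ k → k ≤ j → x (i + k) = true) n

/-- A binary sequence is typical if `L_n(x)/log₂ n → 1`. -/
def Typical (x : ℕ → Bool) : Prop :=
  Tendsto (fun n : ℕ => (runL x n : ℝ) / Real.logb 2 (n : ℝ)) atTop (nhds 1)

open Topology

/-!
The image of `a` is the binary sequence whose ones form runs of length `m s` ending at
position `2 ^ m s`, where `m 0 = 2` and `m (s + 1) = m s + ⌊m s / (a (s + 1) + 1)⌋ + 1`.
Runs are separated by zeros, so from `2 ^ m s` up to the start of the next run `L_n = m s`,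
while `log₂ n` climbs from `m s` to almost `m (s + 1)`: the sequence is typical iff
`m (s + 1) / m s → 1`. As `m (s + 1) / m s - 1` is `1 / (a (s + 1) + 1)` up to an error at
most `1 / m s → 0`, this happens iff `a → ∞`. Each digit of the image depends on finitely
many `a s`, which gives continuity.
-/

theorem le_runL {x : ℕ → Bool} {n i j : ℕ} (hn : i + j ≤ n)
    (hx : ∀ k, 1 ≤ k → k ≤ j → x (i + k) = true) : j ≤ runL x n := by
  classical
  exact Nat.le_findGreatest (by omega) ⟨i, hn, hx⟩

theorem exists_run_runL (x : ℕ → Bool) (n : ℕ) :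
    ∃ i, i + runL x n ≤ n ∧ ∀ k, 1 ≤ k → k ≤ runL x n → x (i + k) = true := by
  classical
  exact Nat.findGreatest_spec
    (P := fun j => ∃ i, i + j ≤ n ∧ ∀ k, 1 ≤ k → k ≤ j → x (i + k) = true) (Nat.zero_le n)
    ⟨0, by omega, fun k h1 h2 => by omega⟩

theorem Nat.two_pow_pred_le_two_pow_sub_self (q : ℕ) : 2 ^ (q - 1) ≤ 2 ^ q - q := by
  cases q with
  | zero => simp
  | succ q =>
    have := Nat.lt_two_pow_self (n := q)
    rw [pow_succ, Nat.add_sub_cancel]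
    omega

theorem Nat.two_pow_pred_lt_two_pow_sub_self {q : ℕ} (hq : 3 ≤ q) : 2 ^ (q - 1) < 2 ^ q - q := by
  obtain ⟨r, rfl⟩ : ∃ r, q = r + 1 := ⟨q - 1, by omega⟩
  have hr : r + 1 < 2 ^ r := by
    induction r, (by omega : 2 ≤ r) using Nat.le_induction with
    | base => norm_num
    | succ r _ ih => rw [pow_succ]; omega
  rw [pow_succ, Nat.add_sub_cancel]
  omega

theorem tendsto_inv_natCast_of_strictMono {m : ℕ → ℕ} (hm : StrictMono m) :
    Tendsto (fun s => (m s : ℝ)⁻¹) atTop (𝓝 0) :=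
  tendsto_inv_atTop_zero.comp (tendsto_natCast_atTop_atTop.comp hm.tendsto_atTop)

theorem tendsto_inv_add_one_iff {u : ℕ → ℕ} :
    Tendsto (fun s => ((u s : ℝ) + 1)⁻¹) atTop (𝓝 0) ↔ Tendsto u atTop atTop := by
  refine ⟨fun h => tendsto_atTop.2 fun C => ?_, fun h => tendsto_inv_atTop_zero.comp
    (tendsto_atTop_add_const_right _ 1 (tendsto_natCast_atTop_atTop.comp h))⟩
  filter_upwards [h.eventually (gt_mem_nhds (inv_pos.2 (by positivity : (0 : ℝ) < C + 1)))]
    with s hs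
  rw [inv_lt_inv₀ (by positivity) (by positivity)] at hs
  have : C + 1 ≤ u s + 1 := by exact_mod_cast hs.le
  omega

theorem Real.natCast_le_logb_two {q n : ℕ} (h : 2 ^ q ≤ n) : (q : ℝ) ≤ Real.logb 2 n := by
  have hn : (0 : ℝ) < n := by exact_mod_cast (Nat.two_pow_pos q).trans_le h
  rw [Real.le_logb_iff_rpow_le one_lt_two hn, Real.rpow_natCast]
  exact_mod_cast h

theorem Real.logb_two_le_natCast {q n : ℕ} (h : n ≤ 2 ^ q) : Real.logb 2 n ≤ q := by
  rcases n.eq_zero_or_pos with rfl | hn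
  · simp
  rw [Real.logb_le_iff_le_rpow one_lt_two (by exact_mod_cast hn), Real.rpow_natCast]
  exact_mod_cast h

-- Bounding `s` by `p` loses nothing (a one at `p` in block `s` forces `s < p`, see
-- `blockSeq_eq_true_iff`) and makes `blockSeq m p` depend on finitely many `m s` only.
def blockSeq (m : ℕ → ℕ) (p : ℕ) : Bool :=
  decide (∃ s : Fin p, 2 ^ m s - m s < p ∧ p ≤ 2 ^ m s)

theorem continuous_blockSeq : Continuous blockSeq :=
  continuous_pi fun p =>
    (continuous_of_discreteTopology (f := fun v : Fin p → ℕ =>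
      decide (∃ s : Fin p, 2 ^ v s - v s < p ∧ p ≤ 2 ^ v s))).comp
      (continuous_pi fun s => continuous_apply (s : ℕ))

section blockSeq

variable {m : ℕ → ℕ}

theorem blockSeq_eq_true_iff (hm : StrictMono m) {p : ℕ} :
    blockSeq m p = true ↔ ∃ s, 2 ^ m s - m s < p ∧ p ≤ 2 ^ m s := by
  rw [blockSeq, decide_eq_true_iff]
  refine ⟨fun ⟨s, hs⟩ => ⟨s, hs⟩, fun ⟨s, hs⟩ => ⟨⟨s, ?_⟩, hs⟩⟩
  have : s ≤ m s := hm.id_le s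
  have := Nat.lt_two_pow_self (n := m s - 1)
  have := Nat.two_pow_pred_le_two_pow_sub_self (m s)
  omega

theorem two_pow_lt_two_pow_sub (hm : StrictMono m) (hm0 : 2 ≤ m 0) {s t : ℕ} (hst : s < t) :
    2 ^ m s < 2 ^ m t - m t := by
  have hlt : m s < m t := hm hst
  have h3 : 3 ≤ m t := by have := hm.monotone (Nat.zero_le s); omega
  calc 2 ^ m s ≤ 2 ^ (m t - 1) := Nat.pow_le_pow_right two_pos (by omega)
    _ < 2 ^ m t - m t := Nat.two_pow_pred_lt_two_pow_sub_self h3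

theorem two_pow_sub_le_two_pow_sub (hm : StrictMono m) (hm0 : 2 ≤ m 0) {s t : ℕ} (hst : s ≤ t) :
    2 ^ m s - m s ≤ 2 ^ m t - m t := by
  rcases hst.eq_or_lt with rfl | hst
  · rfl
  · have := two_pow_lt_two_pow_sub hm hm0 hst
    omega

theorem blockSeq_two_pow_sub (hm : StrictMono m) (hm0 : 2 ≤ m 0) (t : ℕ) :
    blockSeq m (2 ^ m t - m t) = false := by
  rw [← Bool.not_eq_true, blockSeq_eq_true_iff hm]
  rintro ⟨s, hs, hs'⟩
  rcases lt_trichotomy s t with hst | rfl | hst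
  · have := two_pow_lt_two_pow_sub hm hm0 hst
    omega
  · omega
  · have := two_pow_lt_two_pow_sub hm hm0 hst
    omega

theorem exists_le_of_blockSeq_run (hm : StrictMono m) (hm0 : 2 ≤ m 0) {i j : ℕ} (hj : 1 ≤ j)
    (hx : ∀ k, 1 ≤ k → k ≤ j → blockSeq m (i + k) = true) :
    ∃ t, 2 ^ m t - m t < i + j ∧ j ≤ m t := by
  obtain ⟨t, ht, ht'⟩ := (blockSeq_eq_true_iff hm).1 (hx j hj le_rfl)
  refine ⟨t, ht, ?_⟩
  by_contra! hjt
  have hgap := hx (2 ^ m t - m t - i) (by omega) (by omega)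
  rw [Nat.add_sub_cancel' (by omega), blockSeq_two_pow_sub hm hm0] at hgap
  exact Bool.false_ne_true hgap

theorem le_runL_blockSeq (hm : StrictMono m) {s n : ℕ} (hn : 2 ^ m s ≤ n) :
    m s ≤ runL (blockSeq m) n := by
  have := Nat.lt_two_pow_self (n := m s)
  refine le_runL (i := 2 ^ m s - m s) (by omega) fun k hk hk' => ?_
  exact (blockSeq_eq_true_iff hm).2 ⟨s, by omega, by omega⟩

theorem runL_blockSeq_le (hm : StrictMono m) (hm0 : 2 ≤ m 0) {s n : ℕ}
    (hn : n ≤ 2 ^ m (s + 1) - m (s + 1)) : runL (blockSeq m) n ≤ m s := by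
  obtain ⟨i, hi, hx⟩ := exists_run_runL (blockSeq m) n
  rcases Nat.eq_zero_or_pos (runL (blockSeq m) n) with h0 | hpos
  · omega
  obtain ⟨t, ht, hj⟩ := exists_le_of_blockSeq_run hm hm0 hpos hx
  have hts : t ≤ s := by
    by_contra! hst
    have := two_pow_sub_le_two_pow_sub hm hm0 (s := s + 1) hst
    omega
  exact hj.trans (hm.monotone hts)

def blockIndex (m : ℕ → ℕ) (n : ℕ) : ℕ :=
  Nat.findGreatest (fun s => 2 ^ m s ≤ n) n

theorem two_pow_blockIndex_le {n : ℕ} (hn : 2 ^ m 0 ≤ n) : 2 ^ m (blockIndex m n) ≤ n :=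
  Nat.findGreatest_spec (P := fun s => 2 ^ m s ≤ n) (Nat.zero_le n) hn

theorem lt_two_pow_blockIndex_succ (hm : StrictMono m) (n : ℕ) :
    n < 2 ^ m (blockIndex m n + 1) := by
  by_contra! hn
  have hle : blockIndex m n + 1 ≤ n :=
    (hm.id_le _).trans (Nat.lt_two_pow_self.le.trans hn)
  exact (Nat.le_findGreatest (P := fun s => 2 ^ m s ≤ n) hle hn).not_gt (Nat.lt_succ_self _)

theorem tendsto_blockIndex (hm : StrictMono m) : Tendsto (blockIndex m) atTop atTop :=
  tendsto_atTop_atTop.2 fun S => ⟨2 ^ m S, fun n hn =>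
    Nat.le_findGreatest (P := fun s => 2 ^ m s ≤ n)
      ((hm.id_le S).trans (Nat.lt_two_pow_self.le.trans hn)) hn⟩

theorem tendsto_ratio_of_typical_blockSeq (hm : StrictMono m) (hm0 : 2 ≤ m 0)
    (h : Typical (blockSeq m)) : Tendsto (fun s => (m (s + 1) : ℝ) / m s) atTop (𝓝 1) := by
  set g : ℕ → ℕ := fun s => 2 ^ m (s + 1) - m (s + 1)
  have hsep (s : ℕ) : 2 ^ m s < g s := two_pow_lt_two_pow_sub hm hm0 (Nat.lt_succ_self s)
  have hg : Tendsto g atTop atTop := tendsto_atTop_mono (fun s =>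
    (hm.id_le s).trans ((Nat.lt_two_pow_self.trans (hsep s)).le)) tendsto_id
  have hL (s : ℕ) : runL (blockSeq m) (g s) = m s :=
    le_antisymm (runL_blockSeq_le hm hm0 le_rfl) (le_runL_blockSeq hm (hsep s).le)
  have hpos (s : ℕ) : (0 : ℝ) < m s :=
    Nat.cast_pos.2 (two_pos.trans_le (hm0.trans (hm.monotone s.zero_le)))
  have hlog (s : ℕ) : (m (s + 1) : ℝ) ≤ Real.logb 2 (g s) + 1 := by
    have := Real.natCast_le_logb_two (Nat.two_pow_pred_le_two_pow_sub_self (m (s + 1)))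
    rw [Nat.cast_sub (by have := hm.monotone (Nat.zero_le (s + 1)); omega)] at this
    push_cast at this
    linarith
  have hlim : Tendsto (fun s => Real.logb 2 (g s) / m s) atTop (𝓝 1) := by
    simpa [hL] using (h.comp hg).inv₀ one_ne_zero
  refine tendsto_of_tendsto_of_tendsto_of_le_of_le hlim
    (by simpa using hlim.add (tendsto_inv_natCast_of_strictMono hm)) (fun s => ?_) (fun s => ?_)
  · exact div_le_div_of_nonneg_right (Real.logb_two_le_natCast (Nat.sub_le _ _)) (hpos s).le
  · rw [← one_div, ← add_div]
    exact div_le_div_of_nonneg_right (hlog s) (hpos s).le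

theorem runL_blockSeq_div_logb_mem (hm : StrictMono m) (hm0 : 2 ≤ m 0) {s n : ℕ}
    (hlo : 2 ^ m s ≤ n) (hhi : n < 2 ^ m (s + 1)) :
    (m s : ℝ) / m (s + 1) ≤ runL (blockSeq m) n / Real.logb 2 n ∧
      (runL (blockSeq m) n : ℝ) / Real.logb 2 n ≤ m (s + 1) / m s := by
  have hpos : (0 : ℝ) < m s :=
    Nat.cast_pos.2 (two_pos.trans_le (hm0.trans (hm.monotone s.zero_le)))
  have hL₁ : (m s : ℝ) ≤ runL (blockSeq m) n := by exact_mod_cast le_runL_blockSeq hm hlo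
  have hL₂ : (runL (blockSeq m) n : ℝ) ≤ m (s + 1) := by
    have := two_pow_lt_two_pow_sub hm hm0 (Nat.lt_add_one (s + 1))
    exact_mod_cast runL_blockSeq_le hm hm0 (by omega)
  have hlog₁ := Real.natCast_le_logb_two hlo
  have hlog₂ := Real.logb_two_le_natCast hhi.le
  exact ⟨div_le_div₀ (hpos.trans_le hL₁).le hL₁ (hpos.trans_le hlog₁) hlog₂,
    div_le_div₀ (hpos.trans_le (hL₁.trans hL₂)).le hL₂ hpos hlog₁⟩

theorem typical_blockSeq_of_tendsto_ratio (hm : StrictMono m) (hm0 : 2 ≤ m 0)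
    (h : Tendsto (fun s => (m (s + 1) : ℝ) / m s) atTop (𝓝 1)) : Typical (blockSeq m) := by
  have hbounds (n : ℕ) (hn : 2 ^ m 0 ≤ n) :=
    runL_blockSeq_div_logb_mem hm hm0 (two_pow_blockIndex_le hn) (lt_two_pow_blockIndex_succ hm n)
  have h' := h.comp (tendsto_blockIndex hm)
  refine tendsto_of_tendsto_of_tendsto_of_le_of_le' ?_ h'
    (eventually_atTop.2 ⟨_, fun n hn => (hbounds n hn).1⟩)
    (eventually_atTop.2 ⟨_, fun n hn => (hbounds n hn).2⟩)
  simpa using h'.inv₀ one_ne_zero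

theorem typical_blockSeq_iff (hm : StrictMono m) (hm0 : 2 ≤ m 0) :
    Typical (blockSeq m) ↔ Tendsto (fun s => (m (s + 1) : ℝ) / m s) atTop (𝓝 1) :=
  ⟨tendsto_ratio_of_typical_blockSeq hm hm0, typical_blockSeq_of_tendsto_ratio hm hm0⟩

end blockSeq

def runLengths (a : ℕ → ℕ) : ℕ → ℕ
  | 0 => 2
  | s + 1 => runLengths a s + runLengths a s / (a (s + 1) + 1) + 1

theorem strictMono_runLengths (a : ℕ → ℕ) : StrictMono (runLengths a) :=
  strictMono_nat_of_lt_succ fun _ => Nat.lt_succ_of_le (Nat.le_add_right _ _)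

theorem continuous_runLengths : Continuous runLengths := by
  refine continuous_pi fun s => ?_
  induction s with
  | zero => exact continuous_const
  | succ s ih =>
    exact (continuous_of_discreteTopology (f := fun p : ℕ × ℕ => p.1 + p.1 / (p.2 + 1) + 1)).comp
      (ih.prodMk (continuous_apply (s + 1)))

theorem runLengths_ratio_sub_one_mem (a : ℕ → ℕ) (s : ℕ) :
    ((a (s + 1) : ℝ) + 1)⁻¹ ≤ (runLengths a (s + 1) : ℝ) / runLengths a s - 1 ∧
      (runLengths a (s + 1) : ℝ) / runLengths a s - 1 ≤
        ((a (s + 1) : ℝ) + 1)⁻¹ + (runLengths a s : ℝ)⁻¹ := by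
  set M := runLengths a s
  set c := a (s + 1) + 1
  have hM : (0 : ℝ) < M := Nat.cast_pos.2 (two_pos.trans_le
    ((strictMono_runLengths a).monotone s.zero_le))
  have hc : (0 : ℝ) < c := Nat.cast_pos.2 (Nat.succ_pos _)
  have hq₁ : ((M / c : ℕ) : ℝ) ≤ M / c := Nat.cast_div_le
  have hq₂ : (M : ℝ) / c < (M / c : ℕ) + 1 := by
    simpa only [Nat.floor_div_eq_div] using Nat.lt_floor_add_one ((M : ℝ) / c)
  have hratio : (runLengths a (s + 1) : ℝ) / M - 1 = ((M / c : ℕ) + 1) / M := by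
    rw [show runLengths a (s + 1) = M + M / c + 1 from rfl]
    push_cast
    field_simp
    ring
  have hc' : (a (s + 1) : ℝ) + 1 = c := by simp [c]
  rw [hratio, hc']
  constructor
  · calc (c : ℝ)⁻¹ = (M / c) / M := by field_simp
      _ ≤ _ := div_le_div_of_nonneg_right hq₂.le hM.le
  · calc _ ≤ ((M : ℝ) / c + 1) / M := div_le_div_of_nonneg_right (by linarith) hM.le
      _ = _ := by field_simp

theorem tendsto_runLengths_ratio_iff (a : ℕ → ℕ) :
    Tendsto (fun s => (runLengths a (s + 1) : ℝ) / runLengths a s) atTop (𝓝 1) ↔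
      Tendsto a atTop atTop := by
  rw [← tendsto_sub_nhds_zero_iff, ← tendsto_add_atTop_iff_nat (f := a) 1,
    ← tendsto_inv_add_one_iff]
  have hbounds := runLengths_ratio_sub_one_mem a
  constructor
  · intro h
    exact tendsto_of_tendsto_of_tendsto_of_le_of_le tendsto_const_nhds h
      (fun s => by positivity) (fun s => (hbounds s).1)
  · intro h
    exact tendsto_of_tendsto_of_tendsto_of_le_of_le h
      (by simpa using h.add (tendsto_inv_natCast_of_strictMono (strictMono_runLengths a)))
      (fun s => (hbounds s).1) (fun s => (hbounds s).2)

/-- There is a continuous map `f : ℕ^ℕ → {0,1}^ℕ` (Baire space to Cantor space,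
both with product topologies) such that `f a` is typical iff `a_n → ∞`;
consequently `f⁻¹(TpcN) = P₃ = {a : a_n → ∞}`. -/
theorem tpcn_reduction :
    ∃ f : (ℕ → ℕ) → (ℕ → Bool), Continuous f ∧
      (∀ a : ℕ → ℕ, Typical (f a) ↔ Tendsto a atTop atTop) ∧
      f ⁻¹' {x : ℕ → Bool | Typical x} = {a : ℕ → ℕ | Tendsto a atTop atTop} := by
  have key (a : ℕ → ℕ) : Typical (blockSeq (runLengths a)) ↔ Tendsto a atTop atTop :=
    (typical_blockSeq_iff (strictMono_runLengths a) le_rfl).trans (tendsto_runLengths_ratio_iff a)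
  exact ⟨_, continuous_blockSeq.comp continuous_runLengths, key, Set.ext key⟩
end

section
/- Let c ∈ {0,1}^ℕ be the binary Champernowne sequence. For every n ≥ 1, at the position p_n = (n−1)·2^n + 1 (the total length of the binary representations of 1,2,…,2^n − 1) one has L_{p_n}(c) = n. -/
open Filter

/-- The infinite binary sequence (indexed from 1) obtained by concatenating
the nonempty blocks `b 1, b 2, b 3, …`. -/
def concatSeq (b : ℕ → List Bool) : ℕ → Bool :=
  fun i => (((List.range i).map fun k => b (k + 1)).flatten).getD (i - 1) false

/-- The binary Champernowne sequence `1 10 11 100 101 110 111 …`, the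
concatenation of the binary representations (without leading zeros, most
significant bit first) of `1, 2, 3, …`. -/
def champ : ℕ → Bool :=
  concatSeq fun n => (Nat.bits n).reverse

/-!
The binary representations of `1, …, 2^n − 1` fill exactly the first `p_n` digits, and the last
of them, `2^n − 1`, is a block of `n` ones ending at `p_n`. A run of `n + 1` ones cannot occur
there: every block has at most `n` digits, so the run would cover the last `a ≥ 1` digits of some
`m` and then the first digits of `m + 1 < 2^n`. But if `m` ends in `a` ones, then `m + 1` ends in
`a` zeros, and the run reaches one of them.
-/

section ConcatSeq

variable (b : ℕ → List Bool)

def concatPrefix (M : ℕ) : List Bool :=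
  ((List.range M).map fun k => b (k + 1)).flatten

variable {b}

lemma concatSeq_eq_getD_concatPrefix (i : ℕ) :
    concatSeq b i = (concatPrefix b i).getD (i - 1) false := rfl

lemma concatPrefix_succ (M : ℕ) :
    concatPrefix b (M + 1) = concatPrefix b M ++ b (M + 1) := by
  simp [concatPrefix, List.range_succ]

lemma concatPrefix_prefix_of_le {M M' : ℕ} (h : M ≤ M') :
    concatPrefix b M <+: concatPrefix b M' := by
  induction h with
  | refl => exact List.prefix_refl _
  | step _ ih => exact ih.trans ⟨_, (concatPrefix_succ _).symm⟩

lemma le_length_concatPrefix (hb : ∀ k, b (k + 1) ≠ []) (M : ℕ) :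
    M ≤ (concatPrefix b M).length := by
  induction M with
  | zero => simp [concatPrefix]
  | succ M ih =>
    have := List.length_pos_iff.2 (hb M)
    rw [concatPrefix_succ, List.length_append]
    omega

lemma concatSeq_length_concatPrefix_add (hb : ∀ k, b (k + 1) ≠ []) {M j : ℕ}
    (hj : j < (b (M + 1)).length) :
    concatSeq b ((concatPrefix b M).length + j + 1) = (b (M + 1))[j] := by
  set i := (concatPrefix b M).length + j + 1
  have hM : M + 1 ≤ i := by have := le_length_concatPrefix hb M; omega
  have hlt : i - 1 < (concatPrefix b (M + 1)).length := by
    rw [concatPrefix_succ, List.length_append]; omega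
  rw [concatSeq_eq_getD_concatPrefix, List.getD_eq_getElem _ _ (by
      have := le_length_concatPrefix hb i; omega),
    ← (concatPrefix_prefix_of_le hM).getElem hlt]
  simp only [concatPrefix_succ, i]
  rw [List.getElem_append_right (by omega)]
  simp

end ConcatSeq

lemma Nat.getElem_bits_reverse {m j : ℕ} (hj : j < m.bits.reverse.length) :
    m.bits.reverse[j] = m.testBit (m.size - 1 - j) := by
  have hsize := Nat.size_eq_bits_len m
  simp only [List.length_reverse] at hj
  rw [List.getElem_reverse, Nat.testBit_eq_inth, List.getI_eq_getElem _ (by omega)]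
  simp only [hsize]

lemma Nat.size_eq_succ_of_two_pow_le_of_lt {m n : ℕ} (h₁ : 2 ^ n ≤ m) (h₂ : m < 2 ^ (n + 1)) :
    m.size = n + 1 :=
  le_antisymm (Nat.size_le.2 h₂) (Nat.lt_size.2 h₁)

lemma Nat.testBit_succ_eq_false_of_testBit_eq_true {m a r : ℕ}
    (h : ∀ q < a, m.testBit q = true) (hr : r < a) : (m + 1).testBit r = false := by
  have hmod : m % 2 ^ a = 2 ^ a - 1 := Nat.eq_of_testBit_eq fun q => by
    rw [Nat.testBit_mod_two_pow, Nat.testBit_two_pow_sub_one]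
    by_cases hq : q < a <;> simp [hq, h]
  obtain ⟨t, ht⟩ : 2 ^ a ∣ m + 1 := by
    rw [Nat.dvd_iff_mod_eq_zero, Nat.add_mod, hmod]
    rcases Nat.lt_or_ge 1 (2 ^ a) with h2 | h2
    · rw [Nat.mod_eq_of_lt h2, Nat.sub_add_cancel h2.le, Nat.mod_self]
    · have : 2 ^ a = 1 := le_antisymm h2 Nat.one_le_two_pow
      simp [this]
  rw [ht, Nat.testBit_two_pow_mul]
  simp [hr]

/-- The number of digits of `champ` before the block of `m ≥ 1` (using `Nat.size 0 = 0`). -/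
def champStart (m : ℕ) : ℕ := ∑ k ∈ Finset.range m, k.size

lemma champStart_succ (m : ℕ) : champStart (m + 1) = champStart m + m.size :=
  Finset.sum_range_succ _ _

lemma champStart_succ_eq_length (M : ℕ) :
    champStart (M + 1) = (concatPrefix (fun n => n.bits.reverse) M).length := by
  induction M with
  | zero => simp [champStart, concatPrefix]
  | succ M ih => simp [champStart_succ (M + 1), ih, concatPrefix_succ, Nat.size_eq_bits_len]

lemma champ_champStart_add {m j : ℕ} (hj : j < m.size) :
    champ (champStart m + j + 1) = m.testBit (m.size - 1 - j) := by
  obtain ⟨M, rfl⟩ : ∃ M, m = M + 1 := Nat.exists_eq_succ_of_ne_zero (by rintro rfl; simp at hj)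
  have hne : ∀ k, (k + 1).bits.reverse ≠ [] := fun k => by
    rw [← List.length_pos_iff, List.length_reverse, Nat.size_eq_bits_len]
    exact Nat.size_pos.2 k.succ_pos
  rw [champStart_succ_eq_length, champ, concatSeq_length_concatPrefix_add hne
    (by simpa [Nat.size_eq_bits_len] using hj), Nat.getElem_bits_reverse]

lemma champStart_two_pow_succ (n : ℕ) : champStart (2 ^ (n + 1)) = n * 2 ^ (n + 1) + 1 := by
  induction n with
  | zero => decide
  | succ n ih =>
    have hsize : ∀ j ∈ Finset.range (2 ^ (n + 1)), (2 ^ (n + 1) + j).size = n + 2 :=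
      fun j hj => Nat.size_eq_succ_of_two_pow_le_of_lt (by omega)
        (by rw [Finset.mem_range] at hj; rw [pow_succ 2 (n + 1)]; omega)
    rw [pow_succ 2 (n + 1), mul_two, champStart, Finset.sum_range_add, ← champStart, ih,
      Finset.sum_congr rfl hsize]
    simp only [Finset.sum_const, Finset.card_range, smul_eq_mul]
    ring

lemma Nat.exists_le_lt_succ_of_lt {f : ℕ → ℕ} {i M : ℕ} (h₀ : f 0 ≤ i) (h : i < f M) :
    ∃ m < M, f m ≤ i ∧ i < f (m + 1) := by
  induction M with
  | zero => omega
  | succ M ih =>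
    by_cases hM : i < f M
    · obtain ⟨m, hm, hm'⟩ := ih hM
      exact ⟨m, by omega, hm'⟩
    · exact ⟨M, by omega, by omega, h⟩

def HasRun (x : ℕ → Bool) (p j : ℕ) : Prop :=
  ∃ i, i + j ≤ p ∧ ∀ k, 1 ≤ k → k ≤ j → x (i + k) = true

lemma HasRun.mono {x : ℕ → Bool} {p i j : ℕ} (h : HasRun x p j) (hij : i ≤ j) :
    HasRun x p i :=
  let ⟨s, hs, hrun⟩ := h
  ⟨s, by omega, fun k hk hki => hrun k hk (hki.trans hij)⟩

lemma runL_eq_of_hasRun {x : ℕ → Bool} {p n : ℕ} (h : HasRun x p n)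
    (h' : ¬HasRun x p (n + 1)) : runL x p = n := by
  classical
  have hnp : n ≤ p := let ⟨_, hi, _⟩ := h; by omega
  rw [runL, Nat.findGreatest_eq_iff]
  exact ⟨hnp, fun _ => h, fun j hj _ hrun => h' (HasRun.mono hrun hj)⟩

lemma hasRun_champ_champStart_two_pow (n : ℕ) : HasRun champ (champStart (2 ^ n)) n := by
  have hsize : (2 ^ n - 1).size = n := by
    rcases n with _ | n
    · rfl
    · exact Nat.size_eq_succ_of_two_pow_le_of_lt
        (by rw [pow_succ]; have := Nat.one_le_two_pow (n := n); omega)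
        (Nat.sub_lt Nat.one_le_two_pow one_pos)
  refine ⟨champStart (2 ^ n - 1), ?_, fun k hk hkn => ?_⟩
  · have := champStart_succ (2 ^ n - 1)
    rw [Nat.sub_add_cancel Nat.one_le_two_pow, hsize] at this
    omega
  · have := champ_champStart_add (m := 2 ^ n - 1) (j := k - 1) (by omega)
    rw [hsize, Nat.testBit_two_pow_sub_one] at this
    rw [show champStart (2 ^ n - 1) + k = champStart (2 ^ n - 1) + (k - 1) + 1 by omega, this]
    simp only [decide_eq_true_eq]
    omega

lemma not_hasRun_champ_champStart_two_pow (n : ℕ) :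
    ¬HasRun champ (champStart (2 ^ n)) (n + 1) := by
  rintro ⟨i, hi, hrun⟩
  have hone : ∀ q, i ≤ q → q ≤ i + n → champ (q + 1) = true := fun q h₁ h₂ => by
    simpa [show i + (q + 1 - i) = q + 1 by omega] using hrun (q + 1 - i) (by omega) (by omega)
  obtain ⟨m, hm, hmi, him⟩ :=
    Nat.exists_le_lt_succ_of_lt (f := champStart) (Nat.zero_le i) (M := 2 ^ n) (by omega)
  rw [champStart_succ] at him
  have hsize_m : m.size ≤ n := Nat.size_le.2 hm
  have hm_succ : m + 1 < 2 ^ n := by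
    refine lt_of_le_of_ne hm fun h => ?_
    have := champStart_succ m
    rw [h] at this
    omega
  -- the run covers the last `a ≥ 1` digits of the block of `m`
  set a := champStart m + m.size - i
  have hones : ∀ q < a, m.testBit q = true := fun q hq => by
    have := champ_champStart_add (m := m) (j := m.size - 1 - q) (by omega)
    rwa [hone _ (by omega) (by omega), eq_comm,
      show m.size - 1 - (m.size - 1 - q) = q by omega] at this
  have hk : (m + 1).size ≤ n := Nat.size_le.2 hm_succ
  have hk₁ : 1 ≤ (m + 1).size := Nat.size_pos.2 m.succ_pos
  -- the last digit of the run inside the block of `m + 1` is a bit of index `< a`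
  set j := min (n + 1 - a) (m + 1).size - 1
  have := champ_champStart_add (m := m + 1) (j := j) (by omega)
  rw [champStart_succ, hone _ (by omega) (by omega),
    Nat.testBit_succ_eq_false_of_testBit_eq_true hones (by omega)] at this
  exact Bool.noConfusion this

/-- At the position `p_n = (n−1)·2^n + 1` (the total length of the binary
representations of `1, 2, …, 2^n − 1`), the run-length function of the binary
Champernowne sequence equals `n`. -/
theorem champ_runL_at_pn (n : ℕ) (hn : 1 ≤ n) :
    runL champ ((n - 1) * 2 ^ n + 1) = n := by
  obtain ⟨n, rfl⟩ := Nat.exists_eq_add_of_le' hn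
  rw [Nat.add_sub_cancel, ← champStart_two_pow_succ]
  exact runL_eq_of_hasRun (hasRun_champ_champStart_two_pow _)
    (not_hasRun_champ_champStart_two_pow _)
end

section
/- Fix an integer a ≥ 2 and let z ∈ {0,1}^ℕ be the binary sequence obtained by concatenating, for m = 1, 2, 3, … in order, 2^a consecutive copies of the binary representation of m (i.e. z = (1)^{2^a} (10)^{2^a} (11)^{2^a} (100)^{2^a} …). Then limsup_{n→∞} L_n(z)/log₂ n ≥ 2^a / a ≥ 2; in particular z is exceptional (not typical). -/
open Filter

/-- The `m`-th block of `z`: `2^a` consecutive copies of the binary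
representation (without leading zeros, most significant bit first) of `m`. -/
def zblock (a m : ℕ) : List Bool :=
  (List.replicate (2 ^ a) (Nat.bits m).reverse).flatten

lemma bits_two_pow_sub_one (j : ℕ) : Nat.bits (2 ^ j - 1) = List.replicate j true := by
  induction j with
  | zero => simp
  | succ j ih =>
    have h1 : 1 ≤ 2 ^ j := Nat.one_le_two_pow
    have h : 2 ^ (j + 1) - 1 = 2 * (2 ^ j - 1) + 1 := by
      have := pow_succ 2 j; omega
    rw [h, Nat.bit1_bits, ih, List.replicate_succ]

lemma flatten_replicate_replicate (n j : ℕ) :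
    (List.replicate n (List.replicate j true)).flatten = List.replicate (n * j) true := by
  induction n with
  | zero => simp
  | succ n ih =>
    rw [List.replicate_succ, List.flatten_cons, ih, Nat.succ_mul, Nat.add_comm,
      List.replicate_add]

lemma zblock_ones (a j : ℕ) :
    zblock a (2 ^ j - 1) = List.replicate (2 ^ a * j) true := by
  rw [zblock, bits_two_pow_sub_one, List.reverse_replicate, flatten_replicate_replicate]

lemma zblock_length (a m : ℕ) :
    (zblock a m).length = 2 ^ a * (Nat.bits m).length := by
  simp [zblock, List.length_flatten, List.map_replicate, List.sum_replicate, smul_eq_mul]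

def zflat (a t : ℕ) : List Bool := ((List.range t).map fun k => zblock a (k + 1)).flatten

lemma zflat_succ (a t : ℕ) : zflat a (t + 1) = zflat a t ++ zblock a (t + 1) := by
  simp [zflat, List.range_succ]

lemma le_length_zflat (a t : ℕ) : t ≤ (zflat a t).length := by
  induction t with
  | zero => simp
  | succ t ih =>
    rw [zflat_succ, List.length_append]
    have h1 : 1 ≤ (zblock a (t + 1)).length := by
      rw [zblock_length, Nat.size_eq_bits_len]
      have := Nat.one_le_two_pow (n := a)
      have h2 : 0 < Nat.size (t + 1) := Nat.size_pos.2 (Nat.succ_pos t)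
      exact Nat.one_le_iff_ne_zero.2 (by positivity)
    omega

lemma concatSeq_eq (a t i : ℕ) (ht : t ≤ i) (h : i - 1 < (zflat a t).length) :
    concatSeq (zblock a) i = (zflat a t).getD (i - 1) false := by
  have hi : i = t + (i - t) := by omega
  unfold concatSeq
  conv_lhs => rw [hi, List.range_add, List.map_append, List.flatten_append]
  rw [← hi]
  exact List.getD_append _ _ _ _ h

lemma length_zflat_le (a j : ℕ) :
    (zflat a (2 ^ j - 2)).length ≤ 2 ^ j * (2 ^ a * j) := by
  have : ∀ x ∈ (List.range (2 ^ j - 2)).map (fun k => (zblock a (k + 1)).length),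
      x ≤ 2 ^ a * j := by
    intro x hx
    obtain ⟨k, hk, rfl⟩ := List.mem_map.1 hx
    rw [List.mem_range] at hk
    rw [zblock_length, Nat.size_eq_bits_len]
    have hlt : k + 1 < 2 ^ j := by omega
    exact Nat.mul_le_mul_left _ (Nat.size_le.2 hlt)
  have h := List.sum_le_card_nsmul _ _ this
  simp only [List.length_map, List.length_range, smul_eq_mul] at h
  calc (zflat a (2 ^ j - 2)).length
      = ((List.range (2 ^ j - 2)).map (fun k => (zblock a (k + 1)).length)).sum := by
        simp [zflat, List.length_flatten, List.map_map]; rfl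
    _ ≤ (2 ^ j - 2) * (2 ^ a * j) := h
    _ ≤ 2 ^ j * (2 ^ a * j) := Nat.mul_le_mul_right _ (Nat.sub_le _ _)

lemma four_mul_le (j : ℕ) (hj : 6 ≤ j) : 4 * j * (2 ^ j + 1) ≤ 2 ^ (2 * j) := by
  induction j, hj using Nat.le_induction with
  | base => norm_num
  | succ j hj ih =>
    have hx : (64 : ℕ) ≤ 2 ^ j := by
      calc (64:ℕ) = 2 ^ 6 := by norm_num
        _ ≤ 2 ^ j := Nat.pow_le_pow_right (by norm_num) hj
    have e1 : 2 ^ (j + 1) = 2 * 2 ^ j := by rw [pow_succ]; ring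
    have e2 : 2 ^ (2 * (j + 1)) = 4 * 2 ^ (2 * j) := by
      rw [show 2 * (j + 1) = 2 * j + 2 by ring, pow_add]; ring
    rw [e1, e2]
    nlinarith [ih, hx]

lemma two_mul_le_two_pow' (a : ℕ) (ha : 2 ≤ a) : 2 * a ≤ 2 ^ a := by
  induction a, ha using Nat.le_induction with
  | base => norm_num
  | succ a ha ih =>
    have h4 : 4 ≤ 2 ^ a := by
      calc (4:ℕ) = 2 ^ 2 := by norm_num
        _ ≤ 2 ^ a := Nat.pow_le_pow_right (by norm_num) ha
    have := pow_succ 2 a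
    omega

lemma n_le_pow (a j : ℕ) (ha : 2 ≤ a) (hj : 6 ≤ j) :
    2 ^ j * (2 ^ a * j) + 2 ^ a * j ≤ 2 ^ (a * j) := by
  obtain ⟨a', rfl⟩ := Nat.exists_eq_add_of_le ha
  have h1 : 2 ^ j * (2 ^ (2 + a') * j) + 2 ^ (2 + a') * j
      = 2 ^ a' * (4 * j * (2 ^ j + 1)) := by
    rw [pow_add]; ring
  rw [h1]
  calc 2 ^ a' * (4 * j * (2 ^ j + 1)) ≤ 2 ^ a' * 2 ^ (2 * j) :=
        Nat.mul_le_mul_left _ (four_mul_le j hj)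
    _ = 2 ^ (a' + 2 * j) := by rw [pow_add]
    _ ≤ 2 ^ ((2 + a') * j) := Nat.pow_le_pow_right (by norm_num) (by nlinarith)

/-- For `a ≥ 2` and `z = (1)^{2^a} (10)^{2^a} (11)^{2^a} (100)^{2^a} …`, we have
`limsup_n L_n(z)/log₂ n ≥ 2^a/a ≥ 2`; in particular `z` is exceptional
(not typical). -/
theorem zseq_exceptional (a : ℕ) (ha : 2 ≤ a) :
    (((2 ^ a / a : ℝ) : EReal) ≤
      Filter.limsup
        (fun n : ℕ => (((runL (concatSeq (zblock a)) n : ℝ) / Real.logb 2 (n : ℝ) : ℝ) : EReal))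
        atTop) ∧
    (2 : ℝ) ≤ 2 ^ a / a ∧
    ¬ Typical (concatSeq (zblock a)) := by
  set z := concatSeq (zblock a) with hz
  have h2pa : (4 : ℕ) ≤ 2 ^ a := by
    calc (4:ℕ) = 2 ^ 2 := by norm_num
      _ ≤ 2 ^ a := Nat.pow_le_pow_right (by norm_num) ha
  -- the key frequently statement
  have key : ∀ N : ℕ, ∃ n ≥ N, ((2:ℝ) ^ a / a : ℝ) ≤ (runL z n : ℝ) / Real.logb 2 n := by
    intro N
    set j := max 6 N with hjdef
    have hj6 : 6 ≤ j := le_max_left _ _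
    have hjN : N ≤ j := le_max_right _ _
    have hjpow : (2:ℕ) ≤ 2 ^ j := by
      calc (2:ℕ) ≤ 2 ^ 1 := by norm_num
        _ ≤ 2 ^ j := Nat.pow_le_pow_right (by norm_num) (by omega)
    set t := 2 ^ j - 2 with ht
    set r := 2 ^ a * j with hr
    set L := (zflat a t).length with hL
    set n := L + r with hn
    have hm : t + 1 = 2 ^ j - 1 := by omega
    have htL : t ≤ L := le_length_zflat a t
    have hlen : (zflat a (t + 1)).length = L + r := by
      rw [zflat_succ, List.length_append, hm, zblock_ones, List.length_replicate]
    -- the run of ones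
    have hrun : ∀ k, 1 ≤ k → k ≤ r → z (L + k) = true := by
      intro k hk1 hkr
      have h1 : t + 1 ≤ L + k := by omega
      have h2 : (L + k) - 1 < (zflat a (t + 1)).length := by omega
      rw [hz, concatSeq_eq a (t + 1) (L + k) h1 h2, zflat_succ,
        List.getD_append_right _ _ _ _ (by omega : (zflat a t).length ≤ L + k - 1),
        hm, zblock_ones]
      have h3 : L + k - 1 - L < (List.replicate (2 ^ a * j) true).length := by
        rw [List.length_replicate]; omega
      rw [List.getD_eq_getElem _ _ h3, List.getElem_replicate]
    -- lower bound on runL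
    have hrj : j ≤ r := by
      rw [hr]; exact Nat.le_mul_of_pos_left _ (by positivity)
    have hrunL : r ≤ runL z n := by
      unfold runL
      classical
      exact Nat.le_findGreatest (by omega) ⟨L, le_refl n, fun k hk1 hkr => hrun k hk1 hkr⟩
    -- upper bound on n
    have hnle : n ≤ 2 ^ (a * j) := by
      have h1 : L ≤ 2 ^ j * (2 ^ a * j) := by
        rw [hL]; exact length_zflat_le a j
      have h2 := n_le_pow a j ha hj6
      omega
    have hn2 : 2 ≤ n := by
      have : 2 ≤ r := by
        calc 2 ≤ 2 ^ a := by omega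
          _ ≤ 2 ^ a * j := Nat.le_mul_of_pos_right _ (by omega)
      omega
    -- real estimates
    have hnR : (1:ℝ) < (n:ℝ) := by exact_mod_cast by omega
    have hlog_pos : 0 < Real.logb 2 (n:ℝ) := Real.logb_pos (by norm_num) hnR
    have hlog_le : Real.logb 2 (n:ℝ) ≤ (a * j : ℕ) := by
      have h1 : (n:ℝ) ≤ (2:ℝ) ^ (a * j) := by exact_mod_cast hnle
      calc Real.logb 2 (n:ℝ) ≤ Real.logb 2 ((2:ℝ) ^ (a * j)) :=
            Real.logb_le_logb_of_le (by norm_num) (by positivity) h1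
        _ = (a * j : ℕ) := by
            rw [Real.logb_pow, Real.logb_self_eq_one (by norm_num), mul_one]
    have hrlR : ((2:ℝ) ^ a * j) ≤ (runL z n : ℝ) := by
      have : ((r:ℕ):ℝ) ≤ (runL z n : ℝ) := by exact_mod_cast hrunL
      simpa [hr] using this
    refine ⟨n, by omega, ?_⟩
    have hjR : (0:ℝ) < (j:ℝ) := by exact_mod_cast by omega
    have haR : (0:ℝ) < (a:ℝ) := by exact_mod_cast by omega
    have heq : (2:ℝ) ^ a / a = ((2:ℝ) ^ a * j) / ((a:ℝ) * j) :=
      (mul_div_mul_right _ _ (ne_of_gt hjR)).symm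
    rw [heq]
    have hlog_le' : Real.logb 2 (n:ℝ) ≤ (a:ℝ) * (j:ℝ) := by
      convert hlog_le using 2; push_cast; ring
    exact div_le_div₀ (by positivity) hrlR hlog_pos hlog_le'
  have hfreq : ∃ᶠ n in atTop, ((2:ℝ) ^ a / a : ℝ) ≤ (runL z n : ℝ) / Real.logb 2 n :=
    frequently_atTop.2 key
  have h2le : (2 : ℝ) ≤ 2 ^ a / a := by
    have haR : (0:ℝ) < (a:ℝ) := by exact_mod_cast by omega
    rw [le_div_iff₀ haR]
    have := two_mul_le_two_pow' a ha
    calc (2:ℝ) * a = ((2 * a : ℕ) : ℝ) := by push_cast; ring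
      _ ≤ ((2 ^ a : ℕ) : ℝ) := by exact_mod_cast this
      _ = (2:ℝ) ^ a := by push_cast; ring
  refine ⟨?_, h2le, ?_⟩
  · apply le_limsup_of_frequently_le'
    exact hfreq.mono fun n hn => EReal.coe_le_coe_iff.2 hn
  · intro hT
    have hev : ∀ᶠ n in atTop, (runL z n : ℝ) / Real.logb 2 n < 2 :=
      hT.eventually_lt_const (by norm_num)
    obtain ⟨n, hn1, hn2⟩ := (hfreq.and_eventually hev).exists
    linarith
end
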